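/- Fix ℏ ∈ ℂ with ℏ ≠ 0 and N ∈ ℂ. For every j ∈ ℤ the identity ((j−1)/ℏ)·(f_j(u) − f_{j−1}(u)) = u·( (1/ℏ)·f_j'(u) − ((j−1)(j−2)/4)·f_j(u) + ((j−2)/2)·u·f_j'(u) − (u²/4)·f_j''(u) − ((1−4N²)/16)·f_j(u) ) holds in ℂ[[u]]. Equivalently, the Kac–Schwarz operator c_N = (1/4)·d²/dλ² + (1/ℏ)·d/dλ + 1/ℏ² + (1−4N²)/(16λ²) acts on the basis vectors by c_N·Φ_j^{(N)} = ((j−1)/ℏ)·Φ_{j−1}^{(N)} + (1/ℏ²)·Φ_j^{(N)}. -/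

import Mathlib

/-!
Compare coefficients of `u^(k+1)`: every term is a multiple of `c_k = [u^k] f_j`. The operators
`u·d/du` and `u²·d²/du²` act diagonally on monomials, `c_{k+1}/c_k` is read off from
`a_{k+1}(x) = a_k(x)·(4(x−1)² − (2k+1)²)`, and the shift `j ↦ j−1` is governed by
`a_k(x−1)·(2x+2k−3) = a_k(x)·(2x−2k−3)`, which telescopes from the factorisation
`4(x−1)² − (2i+1)² = (2x−2i−3)(2x+2i−1)`.
-/

noncomputable section

namespace BGWKS

/-- Formal derivative of a one-variable formal power series. -/
def d (g : PowerSeries ℂ) : PowerSeries ℂ := PowerSeries.derivative ℂ g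

/-- `a_k(x) = Π_{i=1}^{k} (4(x−1)² − (2i−1)²)`, with `a_0(x) = 1`. -/
def aP (k : ℕ) (x : ℂ) : ℂ := ∏ i ∈ Finset.range k, (4*(x-1)^2 - ((2*i+1 : ℕ) : ℂ)^2)

/-- The series `f_j(u) = Σ_k ((−ℏ)^k·a_k(j−N)/(16^k·k!))·u^k` encoding the basis vector
`Φ_j^{(N)}(λ) = λ^{j−1}·f_j(1/λ)` of the generalized BGW point of the Sato Grassmannian. -/
def f (ℏ N : ℂ) (j : ℤ) : PowerSeries ℂ :=
  PowerSeries.mk fun k => (-ℏ)^k * aP k ((j : ℂ) - N) / (16^k * (Nat.factorial k : ℂ))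

end BGWKS

open PowerSeries

theorem PowerSeries.coeff_X_mul_derivative {R : Type*} [CommSemiring R] (g : R⟦X⟧) (n : ℕ) :
    coeff n (X * d⁄dX R g) = n * coeff n g := by
  cases n with
  | zero => simp
  | succ n => rw [coeff_succ_X_mul, coeff_derivative, mul_comm, Nat.cast_succ]

theorem PowerSeries.coeff_X_sq_mul_derivative_derivative {R : Type*} [CommRing R]
    (g : R⟦X⟧) (n : ℕ) :
    coeff n (X ^ 2 * d⁄dX R (d⁄dX R g)) = n * (n - 1) * coeff n g := by
  have h : X ^ 2 * d⁄dX R (d⁄dX R g) = X * d⁄dX R (X * d⁄dX R g) - X * d⁄dX R g := by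
    rw [Derivation.leibniz, derivative_X, smul_eq_mul, smul_eq_mul]
    ring
  rw [h, map_sub, coeff_X_mul_derivative, coeff_X_mul_derivative]
  ring

namespace BGWKS

theorem aP_succ (k : ℕ) (x : ℂ) :
    aP (k + 1) x = aP k x * (4 * (x - 1) ^ 2 - (2 * k + 1) ^ 2) := by
  rw [aP, Finset.prod_range_succ, ← aP]
  push_cast
  ring

theorem aP_sub_one_mul (k : ℕ) (x : ℂ) :
    aP k (x - 1) * (2 * x + 2 * k - 3) = aP k x * (2 * x - 2 * k - 3) := by
  induction k with
  | zero => simp [aP]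
  | succ k ih =>
    rw [aP_succ, aP_succ]
    push_cast
    linear_combination (2 * x - 2 * k - 5) * (2 * x + 2 * k - 1) * ih

theorem aP_succ_sub_one (k : ℕ) (x : ℂ) :
    aP (k + 1) (x - 1) = aP (k + 1) x - 4 * (k + 1) * (2 * x - 2 * k - 3) * aP k x := by
  rw [aP_succ, aP_succ]
  linear_combination (2 * x - 2 * k - 5) * aP_sub_one_mul k x

theorem coeff_f (ℏ N : ℂ) (j : ℤ) (k : ℕ) :
    coeff k (f ℏ N j) = (-ℏ) ^ k * aP k (j - N) / (16 ^ k * k.factorial) :=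
  coeff_mk _ _

theorem coeff_f_succ (ℏ N : ℂ) (j : ℤ) (k : ℕ) :
    16 * (k + 1) * coeff (k + 1) (f ℏ N j) =
      -ℏ * (4 * (j - N - 1) ^ 2 - (2 * k + 1) ^ 2) * coeff k (f ℏ N j) := by
  rw [coeff_f, coeff_f, aP_succ, Nat.factorial_succ]
  push_cast
  field_simp
  ring

theorem coeff_f_sub_one_succ (ℏ N : ℂ) (j : ℤ) (k : ℕ) :
    coeff (k + 1) (f ℏ N (j - 1)) =
      coeff (k + 1) (f ℏ N j) + ℏ * (2 * (j - N) - 2 * k - 3) / 4 * coeff k (f ℏ N j) := by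
  have hshift : ((j - 1 : ℤ) : ℂ) - N = (j - N) - 1 := by push_cast; ring
  rw [coeff_f, coeff_f, coeff_f, hshift, aP_succ_sub_one, Nat.factorial_succ]
  push_cast
  field_simp
  ring

end BGWKS

open BGWKS

/-- the Kac–Schwarz operator
`c_N = (1/4)·d²/dλ² + (1/ℏ)·d/dλ + 1/ℏ² + (1−4N²)/(16λ²)` acts on the basis vectors by
`c_N·Φ_j^{(N)} = ((j−1)/ℏ)·Φ_{j−1}^{(N)} + (1/ℏ²)·Φ_j^{(N)}`, i.e. the identity below
holds in `ℂ[[u]]`. -/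
theorem kac_schwarz_c_action (ℏ N : ℂ) (hℏ : ℏ ≠ 0) :
    ∀ j : ℤ, (((j : ℂ) - 1)/ℏ) • (f ℏ N j - f ℏ N (j-1)) =
      PowerSeries.X *
        (ℏ⁻¹ • d (f ℏ N j)
          - ((((j : ℂ) - 1)*((j : ℂ) - 2))/4) • f ℏ N j
          + (((j : ℂ) - 2)/2) • (PowerSeries.X * d (f ℏ N j))
          - (1/4 : ℂ) • (PowerSeries.X^2 * d (d (f ℏ N j)))
          - ((1 - 4*N^2)/16) • f ℏ N j) := by
  intro j
  ext n
  cases n with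
  | zero =>
    simp only [coeff_smul, map_sub, coeff_zero_X_mul]
    simp [coeff_f, aP]
  | succ k =>
    simp only [d, coeff_succ_X_mul, coeff_smul, map_sub, map_add, coeff_X_mul_derivative,
      coeff_X_sq_mul_derivative_derivative, coeff_derivative, smul_eq_mul]
    rw [coeff_f_sub_one_succ]
    field_simp
    linear_combination (-8) * coeff_f_succ ℏ N j k
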